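/- For every $x \in \mathbb{S}^m$, the function $z \mapsto \arccos\langle x, \exp_\mu(z) \rangle^2$ is differentiable at every $z \in \mathbb{R}^m$ with $\|z\| < \pi$ and $\exp_\mu(z) \neq -x$, and its gradient $\mathrm{grad}_z\, \arccos\langle x, \exp_\mu(z) \rangle^2 = -2\, \frac{\mathrm{grad}_z \langle x, \exp_\mu(z)\rangle}{\sqrt{1 - \langle x, \exp_\mu(z)\rangle^2}}\, \arccos\langle x, \exp_\mu(z)\rangle$ is bounded on this domain, with bounded directional limits as $z \to \exp_\mu^{-1}(-x)$ and as $\|z\| \to \pi$; in particular there is a constant $C < \infty$ with $\|\mathrm{grad}_z\, \arccos\langle x, \exp_\mu(z)\rangle^2\| \le C$ for all such $z$. -/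

import Mathlib

open MeasureTheory Real Filter
open scoped RealInnerProductSpace BoundedContinuousFunction

noncomputable section

/-- `v k = 2 π^{(k+1)/2} / Γ((k+1)/2)`, the surface volume of the unit sphere `S^k`. -/
def sphereVol (k : ℕ) : ℝ :=
  2 * Real.pi ^ ((k + 1 : ℝ) / 2) / Real.Gamma ((k + 1 : ℝ) / 2)

/-- `γ_m = v_{m+1} / (2 v_m)`. -/
def gammaC (m : ℕ) : ℝ := sphereVol (m + 1) / (2 * sphereVol m)

/-- The north pole `μ = e₂ = (0,1,0,…,0)ᵀ ∈ S^m ⊆ ℝ^{m+1}`. -/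
def northPole (m : ℕ) : EuclideanSpace ℝ (Fin (m + 1)) := EuclideanSpace.single 1 1

/-- The lower half sphere `L^m = {q ∈ S^m : q₂ ≤ 0}`. -/
def lowerHalf (m : ℕ) : Set (EuclideanSpace ℝ (Fin (m + 1))) :=
  {q | ‖q‖ = 1 ∧ q 1 ≤ 0}

/-- The distribution `α·Unif(L^m) + (1-α)·δ_μ`, where `Unif(L^m)` is the normalized
`m`-dimensional Hausdorff (surface) measure on the lower half sphere. -/
def PX (m : ℕ) (α : ℝ) : Measure (EuclideanSpace ℝ (Fin (m + 1))) :=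
  ENNReal.ofReal α •
      ((μH[(m : ℝ)] (lowerHalf m))⁻¹ • (μH[(m : ℝ)]).restrict (lowerHalf m)) +
    ENNReal.ofReal (1 - α) • Measure.dirac (northPole m)

/-- The Fréchet function `F̃(p) = E[arccos⟨p, X⟩²]`. -/
def Ftilde (m : ℕ) (α : ℝ) (p : EuclideanSpace ℝ (Fin (m + 1))) : ℝ :=
  ∫ q, Real.arccos ⟪p, q⟫ ^ 2 ∂(PX m α)

/-- `ι : ℝ^m → ℝ^{m+1}`, `(x₁,…,x_m) ↦ (x₁, 0, x₂, …, x_m)ᵀ`, identifying `ℝ^m` with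
the tangent space of `S^m` at the north pole. -/
def iota (m : ℕ) (x : EuclideanSpace ℝ (Fin m)) : EuclideanSpace ℝ (Fin (m + 1)) :=
  WithLp.toLp 2 (Fin.insertNth 1 0 x)

/-- The exponential map of `S^m` at the north pole `μ`:
`exp_μ(x) = cos(‖x‖) μ + sin(‖x‖) ι(x)/‖x‖`. -/
def expMu (m : ℕ) (x : EuclideanSpace ℝ (Fin m)) : EuclideanSpace ℝ (Fin (m + 1)) :=
  Real.cos ‖x‖ • northPole m + (Real.sin ‖x‖ / ‖x‖) • iota m x

/-- Removing the second coordinate, the left inverse of `ι`. -/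
def iotaInv (m : ℕ) (q : EuclideanSpace ℝ (Fin (m + 1))) : EuclideanSpace ℝ (Fin m) :=
  WithLp.toLp 2 (fun j => q ((1 : Fin (m + 1)).succAbove j))

/-- The inverse `exp_μ⁻¹ : S^m \ {-μ} → {x : ‖x‖ < π}` of the exponential map. -/
def expMuInv (m : ℕ) (p : EuclideanSpace ℝ (Fin (m + 1))) : EuclideanSpace ℝ (Fin m) :=
  (Real.arccos ⟪p, northPole m⟫ / ‖p - ⟪p, northPole m⟫ • northPole m‖) •
    iotaInv m (p - ⟪p, northPole m⟫ • northPole m)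

/-- The cube `[-π/2, π/2]^{m-1}`. -/
def cube (m : ℕ) : Set (Fin (m - 1) → ℝ) :=
  Set.univ.pi fun _ => Set.Icc (-(Real.pi / 2)) (Real.pi / 2)

/-- `g(θ) = ∏_{j=1}^{m-1} cos^{m-j} θⱼ`. -/
def gFun (m : ℕ) (θ : Fin (m - 1) → ℝ) : ℝ :=
  ∏ j, Real.cos (θ j) ^ (m - 1 - (j : ℕ))

/-- `h(θ) = ∏_{j=1}^{m-1} cos θⱼ`. -/
def hFun (m : ℕ) (θ : Fin (m - 1) → ℝ) : ℝ := ∏ j, Real.cos (θ j)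

end

/-!
The derivative `D` of a map `e` into the unit sphere is orthogonal to `e z`, since
`⟪e z, e ·⟫` is maximal at `z`. Hence the derivative of `⟪x, e ·⟫` equals that of
`⟪x + e z, e ·⟫`, of norm at most `‖x + e z‖ ‖D‖ = √(2 (1 + t)) ‖D‖` with `t = ⟪x, e z⟫`.
This factor cancels `√(1 + t)` in `√(1 - t²)`, and Jordan's inequality
`arccos t ≤ π √((1 - t) / 2)` cancels `√(1 - t)`, so the gradient of `arccos ⟪x, e ·⟫ ²` is
bounded by `2 π ‖D‖`; at `t = 1` it vanishes, as `arccos t ² ≤ π² (1 - t) / 2`.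
For `e = exp_μ = cos ‖·‖ μ + ι (sinc ‖·‖ ·)` one has `‖D‖ ≤ 4`.
-/

open InnerProductSpace Topology

section Arccos

variable {t : ℝ}

lemma arccos_le_pi_mul_sqrt (h₁ : -1 ≤ t) (h₂ : t ≤ 1) :
    arccos t ≤ π * √((1 - t) / 2) := by
  have hθ₀ := arccos_nonneg t
  have hθπ := arccos_le_pi t
  have hsin : sin (arccos t / 2) = √((1 - t) / 2) := by
    rw [sin_half_eq_sqrt hθ₀ (by linarith [pi_pos]), cos_arccos h₁ h₂]
  have hjordan := mul_le_sin (x := arccos t / 2) (by linarith) (by linarith)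
  rw [hsin] at hjordan
  have hπ := pi_pos
  calc arccos t = π * (2 / π * (arccos t / 2)) := by field_simp
    _ ≤ π * √((1 - t) / 2) := by gcongr

lemma arccos_sq_le (h₁ : -1 ≤ t) (h₂ : t ≤ 1) : arccos t ^ 2 ≤ π ^ 2 / 2 * (1 - t) := by
  calc arccos t ^ 2 ≤ (π * √((1 - t) / 2)) ^ 2 :=
        pow_le_pow_left₀ (arccos_nonneg t) (arccos_le_pi_mul_sqrt h₁ h₂) 2
    _ = π ^ 2 / 2 * (1 - t) := by
        rw [mul_pow, sq_sqrt (by linarith)]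
        ring

lemma arccos_mul_sqrt_le (h₁ : -1 ≤ t) (h₂ : t ≤ 1) :
    arccos t * √(2 + 2 * t) ≤ π * √(1 - t ^ 2) := by
  calc arccos t * √(2 + 2 * t) ≤ π * √((1 - t) / 2) * √(2 + 2 * t) := by
        gcongr
        exact arccos_le_pi_mul_sqrt h₁ h₂
    _ = π * √(1 - t ^ 2) := by
        rw [mul_assoc, ← sqrt_mul (by linarith)]
        ring_nf

end Arccos

section SphereValued

variable {E F : Type*} [NormedAddCommGroup E] [InnerProductSpace ℝ E]
  [NormedAddCommGroup F] [InnerProductSpace ℝ F] {e : F → E} {D : F →L[ℝ] E} {x : E} {z : F}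

lemma hasFDerivAt_arccos_sq_of_eq_one {g : F → ℝ} (hg : HasFDerivAt g (0 : F →L[ℝ] ℝ) z)
    (hgz : g z = 1) (hg₁ : ∀ v, -1 ≤ g v) (hg₂ : ∀ v, g v ≤ 1) :
    HasFDerivAt (fun v => arccos (g v) ^ 2) (0 : F →L[ℝ] ℝ) z := by
  rw [hasFDerivAt_iff_isLittleO_nhds_zero] at hg ⊢
  refine Asymptotics.IsBigO.trans_isLittleO ?_ hg
  refine .of_bound (π ^ 2 / 2) (Eventually.of_forall fun h => ?_)
  simp only [hgz, arccos_one, zero_apply, sub_zero, ne_eq, OfNat.ofNat_ne_zero,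
    not_false_eq_true, zero_pow, norm_eq_abs, abs_sq]
  rw [abs_of_nonpos (by linarith [hg₂ (z + h)])]
  linarith [arccos_sq_le (hg₁ (z + h)) (hg₂ (z + h))]

lemma innerSL_comp_eq_zero_of_norm_eq_one (he : ∀ v, ‖e v‖ = 1) (hD : HasFDerivAt e D z) :
    (innerSL ℝ (e z)).comp D = 0 := by
  refine IsLocalMax.hasFDerivAt_eq_zero (Eventually.of_forall fun v => ?_)
    ((innerSL ℝ (e z)).hasFDerivAt.comp z hD)
  simp only [Function.comp_apply, innerSL_apply_apply, real_inner_self_eq_norm_sq, he, one_pow]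
  simpa [he] using real_inner_le_norm (e z) (e v)

lemma norm_innerSL_comp_le (hx : ‖x‖ = 1) (he : ∀ v, ‖e v‖ = 1) (hD : HasFDerivAt e D z) :
    ‖(innerSL ℝ x).comp D‖ ≤ √(2 + 2 * ⟪x, e z⟫) * ‖D‖ := by
  have hshift : (innerSL ℝ x).comp D = (innerSL ℝ (x + e z)).comp D := by
    rw [map_add, ContinuousLinearMap.add_comp, innerSL_comp_eq_zero_of_norm_eq_one he hD, add_zero]
  have hnorm : ‖x + e z‖ = √(2 + 2 * ⟪x, e z⟫) := by
    rw [← sqrt_sq (norm_nonneg _), norm_add_sq_real, hx, he]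
    ring_nf
  rw [hshift, ← hnorm, ← innerSL_apply_norm ℝ (x + e z)]
  exact ContinuousLinearMap.opNorm_comp_le _ _

lemma hasFDerivAt_arccos_inner_sq (hx : ‖x‖ = 1) (he : ∀ v, ‖e v‖ = 1)
    (hD : HasFDerivAt e D z) (hne : e z ≠ -x) :
    HasFDerivAt (fun v => arccos ⟪x, e v⟫ ^ 2)
      ((-2 * arccos ⟪x, e z⟫ / √(1 - ⟪x, e z⟫ ^ 2)) • (innerSL ℝ x).comp D) z := by
  have hL : HasFDerivAt (fun v => ⟪x, e v⟫) ((innerSL ℝ x).comp D) z :=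
    (innerSL ℝ x).hasFDerivAt.comp z hD
  have hbound : ∀ v, |⟪x, e v⟫| ≤ 1 := fun v => by
    simpa [hx, he] using abs_real_inner_le_norm x (e v)
  by_cases h₁ : ⟪x, e z⟫ = 1
  · -- the coefficient is `0 / 0` here, but the derivative it multiplies vanishes
    have hL₀ : (innerSL ℝ x).comp D = 0 := by
      rw [(inner_eq_one_iff_of_norm_eq_one hx (he z)).1 h₁]
      exact innerSL_comp_eq_zero_of_norm_eq_one he hD
    rw [hL₀] at hL ⊢
    rw [smul_zero]
    exact hasFDerivAt_arccos_sq_of_eq_one hL h₁ (fun v => (abs_le.1 (hbound v)).1)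
      (fun v => (abs_le.1 (hbound v)).2)
  · have hm₁ : ⟪x, e z⟫ ≠ -1 := by
      rw [Ne, inner_eq_neg_one_iff_of_norm_eq_one hx (he z)]
      exact fun h => hne (by rw [h, neg_neg])
    have hcoef : ((2 : ℕ) : ℝ) * arccos ⟪x, e z⟫ ^ (2 - 1) * -(1 / √(1 - ⟪x, e z⟫ ^ 2)) =
        -2 * arccos ⟪x, e z⟫ / √(1 - ⟪x, e z⟫ ^ 2) := by
      push_cast
      ring
    rw [← hcoef]
    exact ((hasDerivAt_arccos hm₁ h₁).pow 2).comp_hasFDerivAt z hL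

lemma norm_arccos_inner_sq_fderiv_le (hx : ‖x‖ = 1) (he : ∀ v, ‖e v‖ = 1)
    (hD : HasFDerivAt e D z) :
    ‖(-2 * arccos ⟪x, e z⟫ / √(1 - ⟪x, e z⟫ ^ 2)) • (innerSL ℝ x).comp D‖ ≤ 2 * π * ‖D‖ := by
  set t := ⟪x, e z⟫
  have ht : |t| ≤ 1 := by simpa [hx, he] using abs_real_inner_le_norm x (e z)
  rw [norm_smul, norm_eq_abs, abs_div, abs_mul, abs_neg, abs_two,
    abs_of_nonneg (arccos_nonneg t), abs_of_nonneg (sqrt_nonneg _)]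
  calc 2 * arccos t / √(1 - t ^ 2) * ‖(innerSL ℝ x).comp D‖
      ≤ 2 * arccos t / √(1 - t ^ 2) * (√(2 + 2 * t) * ‖D‖) := by
        have := arccos_nonneg t
        gcongr
        exact norm_innerSL_comp_le hx he hD
    _ = 2 * (arccos t * √(2 + 2 * t)) / √(1 - t ^ 2) * ‖D‖ := by ring
    _ ≤ 2 * π * ‖D‖ := by
        gcongr
        refine div_le_of_le_mul₀ (sqrt_nonneg _) (by positivity) ?_
        linarith [arccos_mul_sqrt_le (abs_le.1 ht).1 (abs_le.1 ht).2]

end SphereValued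

section Radial

variable {E : Type*} [NormedAddCommGroup E] [InnerProductSpace ℝ E] {z : E}

lemma hasFDerivAt_norm_of_ne_zero (hz : z ≠ 0) :
    HasFDerivAt (fun v : E => ‖v‖) (‖z‖⁻¹ • innerSL ℝ z) z := by
  have hz' : ‖z‖ ^ 2 ≠ 0 := by positivity
  have h := (hasDerivAt_sqrt hz').comp_hasFDerivAt z (hasStrictFDerivAt_norm_sq z).hasFDerivAt
  simp only [Function.comp_def, sqrt_sq (norm_nonneg _)] at h
  refine h.congr_fderiv (ContinuousLinearMap.ext fun v => ?_)
  simp only [smul_apply, add_apply, innerSL_apply_apply, smul_eq_mul, two_smul]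
  field_simp
  ring

lemma norm_inv_norm_smul_innerSL_le (z : E) : ‖‖z‖⁻¹ • innerSL ℝ z‖ ≤ 1 := by
  rw [norm_smul, innerSL_apply_norm, norm_inv, norm_norm]
  exact inv_mul_le_one_of_le₀ le_rfl (norm_nonneg z)

lemma hasFDerivAt_comp_norm_zero {G : Type*} [NormedAddCommGroup G] [NormedSpace ℝ G]
    {g : ℝ → G} (hg : HasDerivAt g 0 0) :
    HasFDerivAt (fun v : E => g ‖v‖) (0 : E →L[ℝ] G) 0 := by
  rw [hasDerivAt_iff_isLittleO_nhds_zero] at hg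
  rw [hasFDerivAt_iff_isLittleO_nhds_zero]
  have hnorm : Tendsto (fun v : E => ‖v‖) (𝓝 0) (𝓝 0) := by
    simpa using (continuous_norm (E := E)).tendsto 0
  simpa [Function.comp_def] using Asymptotics.isLittleO_norm_right.1 (hg.comp_tendsto hnorm)

lemma hasFDerivAt_sinc_norm_smul_zero :
    HasFDerivAt (fun v : E => sinc ‖v‖ • v) (ContinuousLinearMap.id ℝ E) 0 := by
  rw [hasFDerivAt_iff_isLittleO_nhds_zero]
  have hsinc : Tendsto (fun v : E => sinc ‖v‖ - 1) (𝓝 0) (𝓝 0) := by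
    refine tendsto_sub_nhds_zero_iff.2 ?_
    exact (continuous_sinc.comp continuous_norm).tendsto' (0 : E) 1 (by simp)
  have hsinc' : (fun v : E => sinc ‖v‖ - 1) =o[𝓝 0] (fun _ => (1 : ℝ)) :=
    (Asymptotics.isLittleO_one_iff ℝ).2 hsinc
  simpa [sub_smul] using hsinc'.smul_isBigO (Asymptotics.isBigO_refl (fun v : E => v) (𝓝 0))

lemma sin_norm_div_norm_smul_eq_sinc (v : E) : (sin ‖v‖ / ‖v‖) • v = sinc ‖v‖ • v := by
  rcases eq_or_ne v 0 with rfl | hv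
  · simp
  · rw [sinc_of_ne_zero (norm_ne_zero_iff.2 hv)]

lemma norm_sin_norm_div_norm_smul (v : E) : ‖(sin ‖v‖ / ‖v‖) • v‖ = |sin ‖v‖| := by
  rcases eq_or_ne v 0 with rfl | hv
  · simp
  · rw [norm_smul, norm_div, norm_norm, div_mul_cancel₀ _ (norm_ne_zero_iff.2 hv), norm_eq_abs]

lemma exists_hasFDerivAt_cos_norm (z : E) :
    ∃ L : E →L[ℝ] ℝ, HasFDerivAt (fun v : E => cos ‖v‖) L z ∧ ‖L‖ ≤ 1 := by
  rcases eq_or_ne z 0 with rfl | hz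
  · refine ⟨0, hasFDerivAt_comp_norm_zero (by simpa using hasDerivAt_cos 0), by simp⟩
  · refine ⟨_, (hasDerivAt_cos ‖z‖).comp_hasFDerivAt z (hasFDerivAt_norm_of_ne_zero hz), ?_⟩
    rw [norm_smul, norm_neg, norm_eq_abs]
    exact mul_le_one₀ (abs_sin_le_one _) (norm_nonneg _) (norm_inv_norm_smul_innerSL_le z)

lemma exists_hasFDerivAt_sin_norm_div_norm_smul (z : E) :
    ∃ L : E →L[ℝ] E, HasFDerivAt (fun v : E => (sin ‖v‖ / ‖v‖) • v) L z ∧ ‖L‖ ≤ 3 := by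
  rcases eq_or_ne z 0 with rfl | hz
  · simp_rw [sin_norm_div_norm_smul_eq_sinc]
    exact ⟨_, hasFDerivAt_sinc_norm_smul_zero, ContinuousLinearMap.norm_id_le.trans (by norm_num)⟩
  set r := ‖z‖
  have hr : 0 < r := norm_pos_iff.2 hz
  have hquot := ((hasDerivAt_sin r).div (hasDerivAt_id r) hr.ne').comp_hasFDerivAt z
    (hasFDerivAt_norm_of_ne_zero hz)
  refine ⟨_, hquot.smul (hasFDerivAt_id z), ?_⟩
  have hsin : |sin r / r| ≤ 1 := by
    rw [abs_div, abs_of_pos hr]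
    exact div_le_one_of_le₀ (abs_sin_le_abs.trans (abs_of_pos hr).le) hr.le
  have hderiv : |(cos r * r - sin r * 1) / r ^ 2| * r ≤ 2 := by
    rw [abs_div, abs_of_pos (by positivity : 0 < r ^ 2)]
    have : |cos r * r - sin r * 1| ≤ 2 * r := by
      calc |cos r * r - sin r * 1| ≤ |cos r| * r + |sin r| := by
            simpa [abs_mul, abs_of_pos hr] using abs_sub (cos r * r) (sin r)
        _ ≤ 1 * r + r := by
            gcongr
            · exact abs_cos_le_one r
            · exact abs_sin_le_abs.trans (abs_of_pos hr).le
        _ = 2 * r := by ring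
    calc |cos r * r - sin r * 1| / r ^ 2 * r ≤ 2 * r / r ^ 2 * r := by gcongr
      _ = 2 := by field_simp
  calc ‖(sin r / r) • ContinuousLinearMap.id ℝ E +
        (((cos r * r - sin r * 1) / r ^ 2) • (r⁻¹ • innerSL ℝ z)).smulRight z‖
      ≤ |sin r / r| * 1 + |(cos r * r - sin r * 1) / r ^ 2| * 1 * r := by
        refine (norm_add_le _ _).trans (add_le_add ?_ ?_)
        · rw [norm_smul, norm_eq_abs]
          gcongr
          exact ContinuousLinearMap.norm_id_le
        · rw [ContinuousLinearMap.norm_smulRight_apply, norm_smul, norm_eq_abs]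
          gcongr
          exact norm_inv_norm_smul_innerSL_le z
    _ ≤ 1 + 2 := by
        rw [mul_one, mul_one]
        exact add_le_add hsin hderiv
    _ = 3 := by norm_num

end Radial

section ExpMu

variable {m : ℕ}

lemma inner_iota (z z' : EuclideanSpace ℝ (Fin m)) : ⟪iota m z, iota m z'⟫ = ⟪z, z'⟫ := by
  simp [PiLp.inner_apply, iota, Fin.sum_univ_succAbove _ 1, Fin.insertNth_apply_succAbove]

lemma inner_northPole_iota (z : EuclideanSpace ℝ (Fin m)) : ⟪northPole m, iota m z⟫ = 0 := by
  simp [northPole, iota, EuclideanSpace.inner_single_left]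

def iotaLinearIsometry (m : ℕ) :
    EuclideanSpace ℝ (Fin m) →ₗᵢ[ℝ] EuclideanSpace ℝ (Fin (m + 1)) where
  toFun := iota m
  map_add' z z' := by
    ext i
    rcases Fin.eq_self_or_eq_succAbove 1 i with rfl | ⟨j, rfl⟩ <;>
      simp [iota, Fin.insertNth_apply_succAbove]
  map_smul' c z := by
    ext i
    rcases Fin.eq_self_or_eq_succAbove 1 i with rfl | ⟨j, rfl⟩ <;>
      simp [iota, Fin.insertNth_apply_succAbove]
  norm_map' z := by
    change ‖iota m z‖ = ‖z‖
    rw [← sq_eq_sq₀ (norm_nonneg _) (norm_nonneg _), ← real_inner_self_eq_norm_sq,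
      ← real_inner_self_eq_norm_sq, inner_iota]

@[simp]
lemma iotaLinearIsometry_apply (z : EuclideanSpace ℝ (Fin m)) :
    iotaLinearIsometry m z = iota m z := rfl

lemma norm_northPole : ‖northPole m‖ = 1 := by
  simp [northPole]

lemma expMu_eq (z : EuclideanSpace ℝ (Fin m)) :
    expMu m z = cos ‖z‖ • northPole m + iotaLinearIsometry m ((sin ‖z‖ / ‖z‖) • z) := by
  rw [map_smul]
  rfl

lemma norm_expMu (z : EuclideanSpace ℝ (Fin m)) : ‖expMu m z‖ = 1 := by
  have horth : ⟪cos ‖z‖ • northPole m, iotaLinearIsometry m ((sin ‖z‖ / ‖z‖) • z)⟫ = 0 := by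
    simp [inner_smul_left, inner_smul_right, inner_northPole_iota]
  have hsq : ‖expMu m z‖ ^ 2 = 1 := by
    rw [expMu_eq, norm_add_sq_real, horth, LinearIsometry.norm_map, norm_sin_norm_div_norm_smul,
      norm_smul, norm_northPole, mul_one, norm_eq_abs, sq_abs, sq_abs]
    linarith [cos_sq_add_sin_sq ‖z‖]
  exact (pow_eq_one_iff_of_nonneg (norm_nonneg _) two_ne_zero).1 hsq

lemma exists_hasFDerivAt_expMu (z : EuclideanSpace ℝ (Fin m)) :
    ∃ D : EuclideanSpace ℝ (Fin m) →L[ℝ] EuclideanSpace ℝ (Fin (m + 1)),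
      HasFDerivAt (expMu m) D z ∧ ‖D‖ ≤ 4 := by
  obtain ⟨Lc, hc, hLc⟩ := exists_hasFDerivAt_cos_norm z
  obtain ⟨Ls, hs, hLs⟩ := exists_hasFDerivAt_sin_norm_div_norm_smul z
  let ι := (iotaLinearIsometry m).toContinuousLinearMap
  refine ⟨Lc.smulRight (northPole m) + ι.comp Ls, ?_, ?_⟩
  · rw [show expMu m = _ from funext expMu_eq]
    exact (hc.smul_const _).add (ι.hasFDerivAt.comp z hs)
  · calc ‖Lc.smulRight (northPole m) + ι.comp Ls‖ ≤ 1 * 1 + 3 := by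
          refine (norm_add_le _ _).trans (add_le_add ?_ ?_)
          · rw [ContinuousLinearMap.norm_smulRight_apply, norm_northPole]
            gcongr
          · rw [LinearIsometry.norm_toContinuousLinearMap_comp]
            exact hLs
      _ = 4 := by norm_num

end ExpMu

theorem stmt_13_general (m : ℕ)
    (x : EuclideanSpace ℝ (Fin (m + 1))) (hx : ‖x‖ = 1) :
    ∃ C : ℝ, ∀ z : EuclideanSpace ℝ (Fin m), ‖z‖ < Real.pi → expMu m z ≠ -x →
      ∃ gi : EuclideanSpace ℝ (Fin m),
        HasGradientAt (fun z' => ⟪x, expMu m z'⟫) gi z ∧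
        HasGradientAt (fun z' => Real.arccos ⟪x, expMu m z'⟫ ^ 2)
          ((-2 * Real.arccos ⟪x, expMu m z⟫ /
              Real.sqrt (1 - ⟪x, expMu m z⟫ ^ 2)) • gi) z ∧
        ‖(-2 * Real.arccos ⟪x, expMu m z⟫ /
            Real.sqrt (1 - ⟪x, expMu m z⟫ ^ 2)) • gi‖ ≤ C := by
  refine ⟨2 * π * 4, fun z _ hne => ?_⟩
  obtain ⟨D, hD, hD₄⟩ := exists_hasFDerivAt_expMu z
  refine ⟨(toDual ℝ _).symm ((innerSL ℝ x).comp D), ?_, ?_, ?_⟩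
  · exact hasFDerivAt_iff_hasGradientAt.1 ((innerSL ℝ x).hasFDerivAt.comp z hD)
  · rw [← map_smul]
    exact hasFDerivAt_iff_hasGradientAt.1 (hasFDerivAt_arccos_inner_sq hx norm_expMu hD hne)
  · rw [← map_smul, LinearIsometryEquiv.norm_map]
    exact (norm_arccos_inner_sq_fderiv_le hx norm_expMu hD).trans (by gcongr)

/-- Lemma 4: for every `x ∈ S^m`, the function `z ↦ arccos⟨x, exp_μ(z)⟩²` is
differentiable at every `z` with `‖z‖ < π` and `exp_μ(z) ≠ -x`, its gradient is
`-2 (grad_z ⟨x, exp_μ(z)⟩ / √(1-⟨x, exp_μ(z)⟩²)) arccos⟨x, exp_μ(z)⟩`, and this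
gradient is uniformly bounded on the whole domain by some constant `C`. -/
theorem stmt_13 (m : ℕ) (hm : 2 ≤ m)
    (x : EuclideanSpace ℝ (Fin (m + 1))) (hx : ‖x‖ = 1) :
    ∃ C : ℝ, ∀ z : EuclideanSpace ℝ (Fin m), ‖z‖ < Real.pi → expMu m z ≠ -x →
      ∃ gi : EuclideanSpace ℝ (Fin m),
        HasGradientAt (fun z' => ⟪x, expMu m z'⟫) gi z ∧
        HasGradientAt (fun z' => Real.arccos ⟪x, expMu m z'⟫ ^ 2)
          ((-2 * Real.arccos ⟪x, expMu m z⟫ /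
              Real.sqrt (1 - ⟪x, expMu m z⟫ ^ 2)) • gi) z ∧
        ‖(-2 * Real.arccos ⟪x, expMu m z⟫ /
            Real.sqrt (1 - ⟪x, expMu m z⟫ ^ 2)) • gi‖ ≤ C :=
  stmt_13_general m x hx
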